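/- Inquisitive (global) disjunction ⩔ is strongly undefinable in propositional dependence logic D: for every context φ(a,b) of D, choosing distinct atoms p, q not occurring in φ(a,b), the formula φ(=(p), =(q)) is not equivalent to =(p) ⩔ =(q) in the model M_{pq}; hence no context uniformly defines ⩔. -/

import Mathlib

/-- Formulas of propositional dependence logic D: literals, ⊥, dependence
atoms =(p₁,…,pₙ;q), conjunction and tensor. -/
inductive DForm (α : Type) : Type
  | atom : α → DForm α
  | natom : α → DForm α                    -- negated atom ¬p
  | bot : DForm α
  | dep : List α → α → DForm α             -- dependence atom =(p₁,…,pₙ;q)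
  | and : DForm α → DForm α → DForm α
  | tensor : DForm α → DForm α → DForm α

/-- Team/inquisitive support semantics for dependence logic. -/
def dsupports {W α : Type} (V : W → α → Prop) : Set W → DForm α → Prop
  | s, .atom p => ∀ w ∈ s, V w p
  | s, .natom p => ∀ w ∈ s, ¬ V w p
  | s, .bot => s = ∅
  | s, .dep ps q => ∀ w ∈ s, ∀ w' ∈ s,
      (∀ r ∈ ps, (V w r ↔ V w' r)) → (V w q ↔ V w' q)
  | s, .and ψ χ => dsupports V s ψ ∧ dsupports V s χ
  | s, .tensor ψ χ => ∃ t₁ t₂, dsupports V t₁ ψ ∧ dsupports V t₂ χ ∧ s = t₁ ∪ t₂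

/-- The proposition of a D formula: the set of supporting states. -/
def dprop {W α : Type} (V : W → α → Prop) (φ : DForm α) : Set (Set W) :=
  {s | dsupports V s φ}

/-- The constancy atom =(p): dependence atom with empty antecedent list. -/
def con {α : Type} (p : α) : DForm α := DForm.dep [] p

/-- Tensor of sets of states. -/
def tset {W : Type} (S T : Set (Set W)) : Set (Set W) :=
  {u | ∃ s ∈ S, ∃ t ∈ T, u = s ∪ t}

/-- The model M_pq (worlds w1 = 0, w2 = 1, w3 = 2): p is true exactly at
w1, w2; q is true exactly at w2, w3; every other atom is false everywhere. -/
def VDpq {α : Type} (p q : α) : Fin 3 → α → Prop :=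
  fun w r => (r = p ∧ (w = 0 ∨ w = 1)) ∨ (r = q ∧ (w = 1 ∨ w = 2))

/-- Atoms occurring in a D formula (including inside dependence atoms). -/
def DForm.datoms {α : Type} : DForm α → Set α
  | .atom r => {r}
  | .natom r => {r}
  | .bot => ∅
  | .dep ps q => {r | r ∈ ps} ∪ {q}
  | .and ψ χ => ψ.datoms ∪ χ.datoms
  | .tensor ψ χ => ψ.datoms ∪ χ.datoms

/-- φ is a context with designated atoms a, b: a and b occur neither negated
nor inside a dependence atom. -/
def DForm.isContext {α : Type} (a b : α) : DForm α → Prop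
  | .atom _ => True
  | .natom r => r ≠ a ∧ r ≠ b
  | .bot => True
  | .dep ps q => a ∉ ps ∧ b ∉ ps ∧ q ≠ a ∧ q ≠ b
  | .and ψ χ => ψ.isContext a b ∧ χ.isContext a b
  | .tensor ψ χ => ψ.isContext a b ∧ χ.isContext a b

/-- Substitute the formulas ψ, χ for the (positive, non-dependence)
occurrences of the designated atoms a, b. -/
def dsubstAB {α : Type} [DecidableEq α] (a b : α) (ψ χ : DForm α) :
    DForm α → DForm α
  | .atom r => if r = a then ψ else if r = b then χ else .atom r
  | .natom r => .natom r
  | .bot => .bot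
  | .dep ps q => .dep ps q
  | .and θ η => .and (dsubstAB a b ψ χ θ) (dsubstAB a b ψ χ η)
  | .tensor θ η => .tensor (dsubstAB a b ψ χ θ) (dsubstAB a b ψ χ η)

/-!
In `M_pq` every atom other than `p` and `q` is false at every world, so an instance
`φ(=(p), =(q))` with `p`, `q` fresh denotes a set of teams built from `[=(p)]`, `[=(q)]`,
`{∅}` and the set of all teams by `∩` and `⊗`. Each of these is *admissible*: downward
closed, containing `∅`, containing every singleton as soon as it contains a nonempty team,
and such that the relation "`{x, y}` is in it" is transitive. Admissibility survives `∩`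
and `⊗`: if one factor of `S ⊗ T` is `{∅}` the tensor is the other factor, and otherwise
it contains every team with at most two worlds. But `[=(p) ⩔ =(q)]` contains `{w₁, w₂}`
and `{w₂, w₃}` and not `{w₁, w₃}`.
-/

section Tensor

variable {W : Type} {S T : Set (Set W)}

theorem tset_comm : tset S T = tset T S := by
  ext u
  constructor <;>
    · rintro ⟨s, hs, t, ht, rfl⟩
      exact ⟨t, ht, s, hs, Set.union_comm s t⟩

theorem tset_singleton_empty : tset S {∅} = S := by
  ext u
  constructor
  · rintro ⟨s, hs, t, rfl, rfl⟩
    rwa [Set.union_empty]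
  · exact fun hu => ⟨u, hu, ∅, rfl, (Set.union_empty u).symm⟩

theorem IsLowerSet.tset (hS : IsLowerSet S) (hT : IsLowerSet T) : IsLowerSet (tset S T) := by
  rintro _ u hu ⟨s, hs, t, ht, rfl⟩
  exact ⟨u ∩ s, hS Set.inter_subset_right hs, u ∩ t, hT Set.inter_subset_right ht,
    by rw [← Set.inter_union_distrib_left, Set.inter_eq_left.mpr hu]⟩

end Tensor

structure Admissible {W : Type} (S : Set (Set W)) : Prop where
  empty_mem : ∅ ∈ S
  isLowerSet : IsLowerSet S
  singleton_mem : ∀ ⦃s⦄, s ∈ S → s.Nonempty → ∀ w, {w} ∈ S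
  pair_mem : ∀ x y z, {x, y} ∈ S → {y, z} ∈ S → {x, z} ∈ S

namespace Admissible

variable {W : Type} {S T : Set (Set W)}

theorem univ : Admissible (Set.univ : Set (Set W)) :=
  ⟨trivial, isLowerSet_univ, fun _ _ _ _ => trivial, fun _ _ _ _ _ => trivial⟩

theorem singleton_empty : Admissible ({∅} : Set (Set W)) where
  empty_mem := rfl
  isLowerSet _ _ hts hs := Set.subset_empty_iff.mp (hs ▸ hts)
  singleton_mem _ hs hne := absurd hs hne.ne_empty
  pair_mem x _ _ hxy := absurd hxy (Set.insert_nonempty x _).ne_empty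

theorem exists_nonempty (hS : Admissible S) (hS₀ : S ≠ {∅}) : ∃ s ∈ S, s.Nonempty := by
  by_contra! h
  exact hS₀ (Set.eq_singleton_iff_unique_mem.mpr
    ⟨hS.empty_mem, h⟩)

theorem inter (hS : Admissible S) (hT : Admissible T) : Admissible (S ∩ T) where
  empty_mem := ⟨hS.empty_mem, hT.empty_mem⟩
  isLowerSet := hS.isLowerSet.inter hT.isLowerSet
  singleton_mem _ hs hne w := ⟨hS.singleton_mem hs.1 hne w, hT.singleton_mem hs.2 hne w⟩
  pair_mem x y z hxy hyz := ⟨hS.pair_mem x y z hxy.1 hyz.1, hT.pair_mem x y z hxy.2 hyz.2⟩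

theorem tset (hS : Admissible S) (hT : Admissible T) : Admissible (tset S T) where
  empty_mem := ⟨∅, hS.empty_mem, ∅, hT.empty_mem, (Set.union_empty ∅).symm⟩
  isLowerSet := hS.isLowerSet.tset hT.isLowerSet
  singleton_mem := by
    rintro _ ⟨s, hs, t, ht, rfl⟩ ⟨v, hv | hv⟩ w
    · exact ⟨{w}, hS.singleton_mem hs ⟨v, hv⟩ w, ∅, hT.empty_mem, (Set.union_empty _).symm⟩
    · exact ⟨∅, hS.empty_mem, {w}, hT.singleton_mem ht ⟨v, hv⟩ w, (Set.empty_union _).symm⟩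
  pair_mem x y z := by
    by_cases hS₀ : S = {∅}
    · rw [hS₀, tset_comm, tset_singleton_empty]
      exact hT.pair_mem x y z
    by_cases hT₀ : T = {∅}
    · rw [hT₀, tset_singleton_empty]
      exact hS.pair_mem x y z
    obtain ⟨s, hs, hs₀⟩ := hS.exists_nonempty hS₀
    obtain ⟨t, ht, ht₀⟩ := hT.exists_nonempty hT₀
    exact fun _ _ => ⟨{x}, hS.singleton_mem hs hs₀ x, {z}, hT.singleton_mem ht ht₀ z,
      Set.insert_eq x {z}⟩

end Admissible

section Semantics

variable {W α : Type} {V : W → α → Prop}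

theorem dprop_and (ψ χ : DForm α) : dprop V (.and ψ χ) = dprop V ψ ∩ dprop V χ := rfl

theorem dprop_tensor (ψ χ : DForm α) :
    dprop V (.tensor ψ χ) = tset (dprop V ψ) (dprop V χ) := by
  ext u
  simp only [dprop, tset, dsupports]
  constructor
  · rintro ⟨s, t, hs, ht, rfl⟩
    exact ⟨s, hs, t, ht, rfl⟩
  · rintro ⟨s, hs, t, ht, rfl⟩
    exact ⟨s, t, hs, ht, rfl⟩

theorem dprop_bot : dprop V (.bot : DForm α) = {∅} := rfl

theorem dprop_atom_of_forall_not {r : α} (hr : ∀ w, ¬ V w r) : dprop V (.atom r) = {∅} := by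
  ext s
  simp only [dprop, dsupports, Set.mem_singleton_iff]
  exact ⟨fun h => Set.eq_empty_of_forall_notMem fun w hw => hr w (h w hw),
    fun h w hw => absurd (h ▸ hw) (Set.notMem_empty w)⟩

theorem dprop_natom_of_forall_not {r : α} (hr : ∀ w, ¬ V w r) :
    dprop V (.natom r) = Set.univ :=
  Set.eq_univ_of_forall fun _ w _ => hr w

theorem dprop_dep_of_forall_not (ps : List α) {r : α} (hr : ∀ w, ¬ V w r) :
    dprop V (.dep ps r) = Set.univ :=
  Set.eq_univ_of_forall fun _ w _ w' _ _ => iff_of_false (hr w) (hr w')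

theorem dsupports_con_iff {s : Set W} {x : α} :
    dsupports V s (con x) ↔ ∀ w ∈ s, ∀ w' ∈ s, (V w x ↔ V w' x) := by
  simp [con, dsupports]

theorem dsupports_con_pair {w w' : W} {x : α} :
    dsupports V {w, w'} (con x) ↔ (V w x ↔ V w' x) := by
  simp only [dsupports_con_iff, Set.mem_insert_iff, Set.mem_singleton_iff]
  constructor
  · exact fun h => h w (.inl rfl) w' (.inr rfl)
  · rintro h _ (rfl | rfl) _ (rfl | rfl) <;> simp [h]

theorem admissible_dprop_con (x : α) : Admissible (dprop V (con x)) where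
  empty_mem := by simp [dprop, dsupports_con_iff]
  isLowerSet _ _ hts hs := dsupports_con_iff.mpr fun w hw w' hw' =>
    dsupports_con_iff.mp hs w (hts hw) w' (hts hw')
  singleton_mem _ _ _ v := by simp [dprop, dsupports_con_iff]
  pair_mem _ _ _ hxy hyz := dsupports_con_pair.mpr
    ((dsupports_con_pair.mp hxy).trans (dsupports_con_pair.mp hyz))

theorem admissible_dprop_dsubstAB [DecidableEq α] {a b : α} {ψ χ : DForm α}
    (hψ : Admissible (dprop V ψ)) (hχ : Admissible (dprop V χ)) :
    ∀ φ : DForm α, (∀ r ∈ φ.datoms, ∀ w, ¬ V w r) →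
      Admissible (dprop V (dsubstAB a b ψ χ φ))
  | .atom r, h => by
    simp only [dsubstAB]
    split_ifs
    · exact hψ
    · exact hχ
    · rw [dprop_atom_of_forall_not (h r rfl)]
      exact .singleton_empty
  | .natom r, h => by
    rw [dsubstAB, dprop_natom_of_forall_not (h r rfl)]
    exact .univ
  | .bot, _ => by
    rw [dsubstAB, dprop_bot]
    exact .singleton_empty
  | .dep ps r, h => by
    rw [dsubstAB, dprop_dep_of_forall_not ps (h r (.inr rfl))]
    exact .univ
  | .and θ η, h => by
    rw [dsubstAB, dprop_and]
    exact (admissible_dprop_dsubstAB hψ hχ θ fun r hr => h r (.inl hr)).inter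
      (admissible_dprop_dsubstAB hψ hχ η fun r hr => h r (.inr hr))
  | .tensor θ η, h => by
    rw [dsubstAB, dprop_tensor]
    exact (admissible_dprop_dsubstAB hψ hχ θ fun r hr => h r (.inl hr)).tset
      (admissible_dprop_dsubstAB hψ hχ η fun r hr => h r (.inr hr))

end Semantics

section Mpq

variable {α : Type} {p q : α}

theorem not_VDpq_of_ne {r : α} (hrp : r ≠ p) (hrq : r ≠ q) (w : Fin 3) : ¬ VDpq p q w r := by
  rintro (⟨rfl, -⟩ | ⟨rfl, -⟩) <;> contradiction

theorem not_admissible_gdisj_con (hpq : p ≠ q) :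
    ¬ Admissible {s | dsupports (VDpq p q) s (con p) ∨ dsupports (VDpq p q) s (con q)} := by
  intro h
  have h02 := h.pair_mem 0 1 2 (.inl (dsupports_con_pair.mpr (by simp [VDpq])))
    (.inr (dsupports_con_pair.mpr (by simp [VDpq])))
  simp [dsupports_con_pair, VDpq, hpq, hpq.symm] at h02

end Mpq

theorem gdisj_strongly_undefinable_general {α : Type} [DecidableEq α] (p q a b : α)
    (hpq : p ≠ q) (φ : DForm α) (hp : p ∉ φ.datoms) (hq : q ∉ φ.datoms) :
    ¬ ∀ s : Set (Fin 3),
        dsupports (VDpq p q) s (dsubstAB a b (con p) (con q) φ) ↔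
          (dsupports (VDpq p q) s (con p) ∨ dsupports (VDpq p q) s (con q)) := by
  intro h
  have hfalse : ∀ r ∈ φ.datoms, ∀ w, ¬ VDpq p q w r := fun r hr =>
    not_VDpq_of_ne (ne_of_mem_of_not_mem hr hp) (ne_of_mem_of_not_mem hr hq)
  have hadm := admissible_dprop_dsubstAB (a := a) (b := b)
    (admissible_dprop_con p) (admissible_dprop_con q) φ hfalse
  exact not_admissible_gdisj_con hpq (by rwa [dprop, Set.ext h] at hadm)

/-- the global disjunction ⩔ is strongly undefinable in D: for
every context φ(a,b) and distinct atoms p, q not occurring in φ(a,b) (and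
distinct from a, b), φ(=(p),=(q)) is not equivalent in M_pq to =(p) ⩔ =(q). -/
theorem gdisj_strongly_undefinable {α : Type} [DecidableEq α] (p q a b : α)
    (hpq : p ≠ q) (hpa : p ≠ a) (hpb : p ≠ b) (hqa : q ≠ a) (hqb : q ≠ b)
    (φ : DForm α) (hctx : φ.isContext a b)
    (hp : p ∉ φ.datoms) (hq : q ∉ φ.datoms) :
    ¬ ∀ s : Set (Fin 3),
        dsupports (VDpq p q) s (dsubstAB a b (con p) (con q) φ) ↔
          (dsupports (VDpq p q) s (con p) ∨ dsupports (VDpq p q) s (con q)) :=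
  gdisj_strongly_undefinable_general p q a b hpq φ hp hq
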